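/- Define Ψ_m(α, β) = β − m if β − α ≥ m, and Ψ_m(α, β) = α otherwise. Let S be a finite set of pairs of integers that is symmetric (i.e., (α,β) ∈ S implies (β,α) ∈ S), and let δ_m(S) = min_{s ∈ S} Ψ_m(s). Then δ_{−m}(S) = δ_m(S) + m. -/

import Mathlib

lemma psi_key (m a b : ℤ) :
    (if b - a ≥ -m then b - (-m) else a) =
      (if a - b ≥ m then a - m else b) + m := by
  rcases lt_trichotomy (a - b) m with h | h | h
  · rw [if_neg (not_le.2 h), if_pos (by omega)]; omega
  · rw [if_pos h.ge, if_pos (by omega)]; omega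
  · rw [if_pos h.le, if_neg (by omega)]; omega

/-- For a nonempty finite symmetric set `S ⊆ ℤ²` and
`Ψ_m(α, β) = if β − α ≥ m then β − m else α`, the minimum
`δ_m(S) = min_{s ∈ S} Ψ_m(s)` satisfies `δ_{−m}(S) = δ_m(S) + m`. -/
theorem stmt_19 (S : Finset (ℤ × ℤ)) (hS : S.Nonempty)
    (hsym : ∀ a b : ℤ, (a, b) ∈ S → (b, a) ∈ S) (m : ℤ) :
    S.inf' hS (fun s => if s.2 - s.1 ≥ -m then s.2 - (-m) else s.1) =
      S.inf' hS (fun s => if s.2 - s.1 ≥ m then s.2 - m else s.1) + m := by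
  set f : ℤ × ℤ → ℤ := fun s => if s.2 - s.1 ≥ -m then s.2 - (-m) else s.1 with hf
  set g : ℤ × ℤ → ℤ := fun s => if s.2 - s.1 ≥ m then s.2 - m else s.1 with hg
  apply le_antisymm
  · obtain ⟨⟨a, b⟩, hab, hval⟩ := S.exists_mem_eq_inf' hS g
    rw [hval]
    have hba := hsym a b hab
    calc S.inf' hS f ≤ f (b, a) := Finset.inf'_le _ hba
      _ = g (a, b) + m := by simp only [hf, hg]; exact psi_key m b a
  · obtain ⟨⟨a, b⟩, hab, hval⟩ := S.exists_mem_eq_inf' hS f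
    rw [hval]
    have hba := hsym a b hab
    have : f (a, b) = g (b, a) + m := by simp only [hf, hg]; exact psi_key m a b
    rw [this]
    exact add_le_add_left (Finset.inf'_le _ hba) m
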